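/- arXiv:1201.4903 — 2 statements merged into one kernel-verified Lean document; each statement's English description precedes it below -/
import Mathlib

section
/- If the closest point projection π is continuous on a neighborhood of the closed triangle K, then the transfinite map φ_K^h extends continuously to all of the closed triangle K̄, including the vertices u and v where the formula has apparent singularities (λ_u = 1 or λ_v = 1), with φ_K^h(u) = π(u) and φ_K^h(v) = π(v). -/
/-- The transfinite (blending) map `φ_K^h` of a positively cut triangle, written in barycentric
coordinates `(a, b, c)` relative to the vertices `u, v, w`. -/
noncomputable def transfiniteMap (u v w : EuclideanSpace ℝ (Fin 2))
    (π ph : EuclideanSpace ℝ (Fin 2) → EuclideanSpace ℝ (Fin 2)) (a b c : ℝ) :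
    EuclideanSpace ℝ (Fin 2) :=
  (2 * (1 - a))⁻¹ • (b • π (a • u + (1 - a) • v) + (a * c) • π u)
    + (2 * (1 - b))⁻¹ • (a • π ((1 - b) • u + b • v) + (b * c) • π v)
    + c • ph w

set_option maxHeartbeats 1000000

/-- If `π` is continuous on a neighborhood of the closed triangle `K̄`, the transfinite map
extends continuously to all of `K̄`, including the vertices `u`, `v` (where `λ_u = 1` or
`λ_v = 1` and the formula has apparent singularities), taking there the values `π u`, `π v`. -/
theorem stmt6 (u v w : EuclideanSpace ℝ (Fin 2))
    (hb : AffineIndependent ℝ ![u, v, w])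
    (hspan : affineSpan ℝ (Set.range ![u, v, w]) = ⊤)
    (π ph : EuclideanSpace ℝ (Fin 2) → EuclideanSpace ℝ (Fin 2))
    (V : Set (EuclideanSpace ℝ (Fin 2))) (hVopen : IsOpen V)
    (hKV : convexHull ℝ {u, v, w} ⊆ V) (hπcont : ContinuousOn π V) :
    let B : AffineBasis (Fin 3) ℝ (EuclideanSpace ℝ (Fin 2)) := ⟨![u, v, w], hb, hspan⟩
    ∃ g : EuclideanSpace ℝ (Fin 2) → EuclideanSpace ℝ (Fin 2),
      ContinuousOn g (convexHull ℝ {u, v, w}) ∧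
      g u = π u ∧ g v = π v ∧
      ∀ x ∈ convexHull ℝ {u, v, w}, B.coord 0 x ≠ 1 → B.coord 1 x ≠ 1 →
        g x = transfiniteMap u v w π ph (B.coord 0 x) (B.coord 1 x) (B.coord 2 x) := by
  intro B
  classical
  have h0 : B 0 = u := rfl
  have h1 : B 1 = v := rfl
  have h2 : B 2 = w := rfl
  set T : Set (EuclideanSpace ℝ (Fin 2)) := convexHull ℝ {u, v, w} with hTdef
  have hTB : T = {x | ∀ i, 0 ≤ B.coord i x} := by
    rw [hTdef, ← B.convexHull_eq_nonneg_coord]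
    congr 1
    show ({u, v, w} : Set _) = Set.range ![u, v, w]
    simp only [Matrix.range_cons, Matrix.range_empty, Set.union_empty, Set.union_singleton]
    ext x; simp; tauto
  have hnn : ∀ x ∈ T, ∀ i, 0 ≤ B.coord i x := by rw [hTB]; exact fun x hx => hx
  have hsum : ∀ x, B.coord 0 x + B.coord 1 x + B.coord 2 x = 1 := fun x => by
    have := B.sum_coord_apply_eq_one x; rwa [Fin.sum_univ_three] at this
  have hau : B.coord 0 u = 1 := by
    have h := B.coord_apply (i := 0) (j := 0); rw [h0] at h; simpa using h
  have hbu : B.coord 1 u = 0 := by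
    have h := B.coord_apply (i := 1) (j := 0); rw [h0] at h; simpa using h
  have hcu : B.coord 2 u = 0 := by
    have h := B.coord_apply (i := 2) (j := 0); rw [h0] at h; simpa using h
  have hav : B.coord 0 v = 0 := by
    have h := B.coord_apply (i := 0) (j := 1); rw [h1] at h; simpa using h
  have hbv : B.coord 1 v = 1 := by
    have h := B.coord_apply (i := 1) (j := 1); rw [h1] at h; simpa using h
  have hcv : B.coord 2 v = 0 := by
    have h := B.coord_apply (i := 2) (j := 1); rw [h1] at h; simpa using h
  have hu : u ∈ T := subset_convexHull ℝ _ (by simp)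
  have hv : v ∈ T := subset_convexHull ℝ _ (by simp)
  have hTV : T ⊆ V := hKV
  have hTconv : Convex ℝ T := convex_convexHull ℝ _
  have ha1 : ∀ x ∈ T, B.coord 0 x ≤ 1 := fun x hx => by
    have := hsum x; have := hnn x hx 1; have := hnn x hx 2; linarith
  have hb1 : ∀ x ∈ T, B.coord 1 x ≤ 1 := fun x hx => by
    have := hsum x; have := hnn x hx 0; have := hnn x hx 2; linarith
  set p1 : EuclideanSpace ℝ (Fin 2) → EuclideanSpace ℝ (Fin 2) :=
    fun x => (B.coord 0 x) • u + (1 - B.coord 0 x) • v with hp1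
  set p2 : EuclideanSpace ℝ (Fin 2) → EuclideanSpace ℝ (Fin 2) :=
    fun x => (1 - B.coord 1 x) • u + (B.coord 1 x) • v with hp2
  have hp1T : ∀ x ∈ T, p1 x ∈ T := fun x hx =>
    hTconv hu hv (hnn x hx 0) (by linarith [ha1 x hx]) (by ring)
  have hp2T : ∀ x ∈ T, p2 x ∈ T := fun x hx =>
    hTconv hu hv (by linarith [hb1 x hx]) (hnn x hx 1) (by ring)
  have hca : Continuous fun x => B.coord 0 x := (B.coord 0).continuous_of_finiteDimensional
  have hcb : Continuous fun x => B.coord 1 x := (B.coord 1).continuous_of_finiteDimensional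
  have hcc : Continuous fun x => B.coord 2 x := (B.coord 2).continuous_of_finiteDimensional
  have hp1c : Continuous p1 := (hca.smul continuous_const).add
    ((continuous_const.sub hca).smul continuous_const)
  have hp2c : Continuous p2 := ((continuous_const.sub hcb).smul continuous_const).add
    (hcb.smul continuous_const)
  have hπ1 : ContinuousOn (fun x => π (p1 x)) T :=
    hπcont.comp hp1c.continuousOn fun x hx => hTV (hp1T x hx)
  have hπ2 : ContinuousOn (fun x => π (p2 x)) T :=
    hπcont.comp hp2c.continuousOn fun x hx => hTV (hp2T x hx)
  set g : EuclideanSpace ℝ (Fin 2) → EuclideanSpace ℝ (Fin 2) := fun x =>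
    (2⁻¹ * (B.coord 1 x / (1 - B.coord 0 x))) • (π (p1 x) - π u)
    + (2⁻¹ * (B.coord 0 x / (1 - B.coord 1 x))) • (π (p2 x) - π v)
    + ((1 - B.coord 2 x) / 2) • (π u + π v) + (B.coord 2 x) • ph w with hg
  have hF1 : ContinuousOn
      (fun x => (2⁻¹ * (B.coord 1 x / (1 - B.coord 0 x))) • (π (p1 x) - π u)) T := by
    intro x0 hx0
    by_cases hx : B.coord 0 x0 = 1
    · have hG : ContinuousWithinAt (fun x => π (p1 x) - π u) T x0 :=
        (hπ1 x0 hx0).sub continuousWithinAt_const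
      have hp1u : p1 x0 = u := by rw [hp1]; simp [hx]
      rw [ContinuousWithinAt]
      have hval : (2⁻¹ * (B.coord 1 x0 / (1 - B.coord 0 x0))) • (π (p1 x0) - π u) = 0 := by
        simp [hx]
      rw [hval]
      apply squeeze_zero_norm' (a := fun x => ‖π (p1 x) - π u‖)
      · filter_upwards [self_mem_nhdsWithin] with x hxT
        rw [norm_smul]
        refine mul_le_of_le_one_left (norm_nonneg _) ?_
        rcases eq_or_ne (B.coord 0 x) 1 with h | h
        · simp [h]
        · have hlt : B.coord 0 x < 1 := lt_of_le_of_ne (ha1 x hxT) h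
          have hd : (0:ℝ) < 1 - B.coord 0 x := by linarith
          have ht0 : 0 ≤ B.coord 1 x / (1 - B.coord 0 x) := div_nonneg (hnn x hxT 1) hd.le
          have ht1 : B.coord 1 x / (1 - B.coord 0 x) ≤ 1 := by
            rw [div_le_one hd]
            have := hsum x; have := hnn x hxT 2; linarith
          rw [Real.norm_eq_abs, abs_of_nonneg (by positivity)]
          linarith
      · have := hG.norm
        rw [ContinuousWithinAt, hp1u] at this
        simpa using this
    · have hd : (1:ℝ) - B.coord 0 x0 ≠ 0 := sub_ne_zero_of_ne (Ne.symm hx)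
      exact (continuousWithinAt_const.mul
        (hcb.continuousWithinAt.div (continuous_const.sub hca).continuousWithinAt hd)).smul
        ((hπ1 x0 hx0).sub continuousWithinAt_const)
  have hF2 : ContinuousOn
      (fun x => (2⁻¹ * (B.coord 0 x / (1 - B.coord 1 x))) • (π (p2 x) - π v)) T := by
    intro x0 hx0
    by_cases hx : B.coord 1 x0 = 1
    · have hG : ContinuousWithinAt (fun x => π (p2 x) - π v) T x0 :=
        (hπ2 x0 hx0).sub continuousWithinAt_const
      have hp2v : p2 x0 = v := by rw [hp2]; simp [hx]
      rw [ContinuousWithinAt]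
      have hval : (2⁻¹ * (B.coord 0 x0 / (1 - B.coord 1 x0))) • (π (p2 x0) - π v) = 0 := by
        simp [hx]
      rw [hval]
      apply squeeze_zero_norm' (a := fun x => ‖π (p2 x) - π v‖)
      · filter_upwards [self_mem_nhdsWithin] with x hxT
        rw [norm_smul]
        refine mul_le_of_le_one_left (norm_nonneg _) ?_
        rcases eq_or_ne (B.coord 1 x) 1 with h | h
        · simp [h]
        · have hlt : B.coord 1 x < 1 := lt_of_le_of_ne (hb1 x hxT) h
          have hd : (0:ℝ) < 1 - B.coord 1 x := by linarith
          have ht0 : 0 ≤ B.coord 0 x / (1 - B.coord 1 x) := div_nonneg (hnn x hxT 0) hd.le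
          have ht1 : B.coord 0 x / (1 - B.coord 1 x) ≤ 1 := by
            rw [div_le_one hd]
            have := hsum x; have := hnn x hxT 2; linarith
          rw [Real.norm_eq_abs, abs_of_nonneg (by positivity)]
          linarith
      · have := hG.norm
        rw [ContinuousWithinAt, hp2v] at this
        simpa using this
    · have hd : (1:ℝ) - B.coord 1 x0 ≠ 0 := sub_ne_zero_of_ne (Ne.symm hx)
      exact (continuousWithinAt_const.mul
        (hca.continuousWithinAt.div (continuous_const.sub hcb).continuousWithinAt hd)).smul
        ((hπ2 x0 hx0).sub continuousWithinAt_const)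
  have hF3 : ContinuousOn (fun x => ((1 - B.coord 2 x) / 2) • (π u + π v)) T :=
    (((continuous_const.sub hcc).div_const 2).smul continuous_const).continuousOn
  have hF4 : ContinuousOn (fun x => (B.coord 2 x) • ph w) T :=
    (hcc.smul continuous_const).continuousOn
  refine ⟨g, ((hF1.add hF2).add hF3).add hF4, ?_, ?_, ?_⟩
  · rw [hg]
    simp only [hau, hbu, hcu, hp1, hp2]
    simp only [sub_self, div_zero, mul_zero, zero_smul, zero_add, sub_zero, div_one, mul_one,
      one_smul, add_zero]
    module
  · rw [hg]
    simp only [hav, hbv, hcv, hp1, hp2]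
    simp only [sub_self, div_zero, mul_zero, zero_smul, zero_add, sub_zero, div_one, mul_one,
      one_smul, add_zero, zero_div]
    module
  · intro x hx hxa hxb
    have hd1 : (1:ℝ) - B.coord 0 x ≠ 0 := sub_ne_zero_of_ne (Ne.symm hxa)
    have hd2 : (1:ℝ) - B.coord 1 x ≠ 0 := sub_ne_zero_of_ne (Ne.symm hxb)
    have e1 : (2 * (1 - B.coord 0 x))⁻¹ * (B.coord 1 x)
        = 2⁻¹ * (B.coord 1 x / (1 - B.coord 0 x)) := by
      field_simp
    have e2 : (2 * (1 - B.coord 0 x))⁻¹ * (B.coord 0 x * B.coord 2 x)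
        = (1 - B.coord 2 x) / 2 - 2⁻¹ * (B.coord 1 x / (1 - B.coord 0 x)) := by
      have hbx : B.coord 1 x = 1 - B.coord 0 x - B.coord 2 x := by linarith [hsum x]
      rw [hbx]; field_simp; ring
    have e3 : (2 * (1 - B.coord 1 x))⁻¹ * (B.coord 0 x)
        = 2⁻¹ * (B.coord 0 x / (1 - B.coord 1 x)) := by
      field_simp
    have e4 : (2 * (1 - B.coord 1 x))⁻¹ * (B.coord 1 x * B.coord 2 x)
        = (1 - B.coord 2 x) / 2 - 2⁻¹ * (B.coord 0 x / (1 - B.coord 1 x)) := by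
      have hax : B.coord 0 x = 1 - B.coord 1 x - B.coord 2 x := by linarith [hsum x]
      rw [hax]; field_simp; ring
    rw [hg, transfiniteMap]
    simp only [hp1, hp2]
    simp only [smul_add, smul_smul, e1, e2, e3, e4]
    module
end

section
/- Let T be a nondegenerate triangle in ℝ² and T' a perturbed triangle whose vertices are each moved by at most ε. If ε is smaller than half the minimal height (distance from a vertex to the opposite side) of T, then T' is nondegenerate and has the same orientation as T. -/
open Metric

private abbrev E2 := EuclideanSpace ℝ (Fin 2)

private lemma keylem (x y z x' y' z' : E2) (ε : ℝ)
    (hx : dist x x' ≤ ε) (hy : dist y y' ≤ ε) (hz : dist z z' ≤ ε)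
    (β γ : ℝ) (hβ : 0 ≤ β) (hγ : 0 ≤ γ) (hs : β + γ = 1)
    (hcomb : x' = β • y' + γ • z')
    (hε : 2 * ε < infDist x ↑(affineSpan ℝ ({y, z} : Set E2))) : False := by
  set p : E2 := β • y + γ • z with hp
  have hpmem : p ∈ affineSpan ℝ ({y, z} : Set E2) := by
    have h := AffineMap.lineMap_mem_affineSpan_pair γ y z
    have heq : (AffineMap.lineMap y z) γ = p := by
      simp only [AffineMap.lineMap_apply_module, hp]
      have : (1 : ℝ) - γ = β := by linarith
      rw [this]
    rwa [heq] at h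
  have h1 : infDist x ↑(affineSpan ℝ ({y, z} : Set E2)) ≤ dist x p :=
    infDist_le_dist_of_mem hpmem
  have h2 : dist x' p ≤ ε := by
    have he : x' - p = β • (y' - y) + γ • (z' - z) := by
      rw [hcomb, hp]; module
    rw [dist_eq_norm, he]
    have hy' : ‖y' - y‖ ≤ ε := by
      have : ‖y' - y‖ = dist y y' := by rw [dist_eq_norm, norm_sub_rev]
      rw [this]; exact hy
    have hz' : ‖z' - z‖ ≤ ε := by
      have : ‖z' - z‖ = dist z z' := by rw [dist_eq_norm, norm_sub_rev]
      rw [this]; exact hz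
    calc ‖β • (y' - y) + γ • (z' - z)‖ ≤ ‖β • (y' - y)‖ + ‖γ • (z' - z)‖ := norm_add_le _ _
      _ = β * ‖y' - y‖ + γ * ‖z' - z‖ := by
          rw [norm_smul, norm_smul, Real.norm_of_nonneg hβ, Real.norm_of_nonneg hγ]
      _ ≤ β * ε + γ * ε := by
          have := mul_le_mul_of_nonneg_left hy' hβ
          have := mul_le_mul_of_nonneg_left hz' hγ
          linarith
      _ = ε := by rw [← add_mul, hs, one_mul]
  have h3 : dist x p ≤ 2 * ε := by
    calc dist x p ≤ dist x x' + dist x' p := dist_triangle _ _ _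
      _ ≤ ε + ε := add_le_add hx h2
      _ = 2 * ε := by ring
  linarith

private lemma keylem2 (x y z x' y' z' : E2) (ε : ℝ)
    (hx : dist x x' ≤ ε) (hy : dist y y' ≤ ε) (hz : dist z z' ≤ ε)
    (r s t : ℝ) (hr : r < 0) (hs : 0 ≤ s) (ht : 0 ≤ t)
    (hsum : r + s + t = 0) (hcomb : r • x' + s • y' + t • z' = 0)
    (hε : 2 * ε < infDist x ↑(affineSpan ℝ ({y, z} : Set E2))) : False := by
  have hr' : (0:ℝ) < -r := by linarith
  refine keylem x y z x' y' z' ε hx hy hz (s / (-r)) (t / (-r))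
    (by positivity) (by positivity) ?_ ?_ hε
  · rw [← add_div, div_eq_one_iff_eq (ne_of_gt hr')]
    linarith
  · have h : (-r) • x' = s • y' + t • z' := by
      linear_combination (norm := module) -hcomb
    have h2 := congrArg (fun v : E2 => (-r)⁻¹ • v) h
    simp only [smul_add, smul_smul] at h2
    rw [inv_mul_cancel₀ (ne_of_gt hr'), one_smul] at h2
    rw [div_eq_inv_mul, div_eq_inv_mul]
    exact h2

private lemma nondeg (a b c a' b' c' : E2) (ε : ℝ)
    (ha : dist a a' ≤ ε) (hb : dist b b' ≤ ε) (hc : dist c c' ≤ ε)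
    (hεa : 2 * ε < infDist a ↑(affineSpan ℝ ({b, c} : Set E2)))
    (hεb : 2 * ε < infDist b ↑(affineSpan ℝ ({a, c} : Set E2)))
    (hεc : 2 * ε < infDist c ↑(affineSpan ℝ ({a, b} : Set E2))) :
    (b' - a') 0 * (c' - a') 1 - (b' - a') 1 * (c' - a') 0 ≠ 0 := by
  intro hdet
  simp only [PiLp.sub_apply] at hdet
  -- find (s,t) ≠ (0,0) with s•(b'-a') + t•(c'-a') = 0
  obtain ⟨s, t, hst, hcomb⟩ : ∃ s t : ℝ, ¬(s = 0 ∧ t = 0) ∧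
      s • (b' - a') + t • (c' - a') = 0 := by
    by_cases hv : c' - a' = 0
    · exact ⟨0, 1, by simp, by simp [hv]⟩
    · have hcoord : (c' - a') 0 ≠ 0 ∨ (c' - a') 1 ≠ 0 := by
        by_contra h
        push_neg at h
        apply hv
        ext i
        fin_cases i
        · simpa using h.1
        · simpa using h.2
      rcases hcoord with h0 | h1
      · refine ⟨(c' - a') 0, -((b' - a') 0), fun h => h0 h.1, ?_⟩
        ext i
        fin_cases i
        · simp [PiLp.smul_apply, smul_eq_mul]; ring
        · simp [PiLp.smul_apply, smul_eq_mul]; linear_combination -hdet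
      · refine ⟨(c' - a') 1, -((b' - a') 1), fun h => h1 h.1, ?_⟩
        ext i
        fin_cases i
        · simp [PiLp.smul_apply, smul_eq_mul]; linear_combination hdet
        · simp [PiLp.smul_apply, smul_eq_mul]; ring
  have hcomb' : (-(s + t)) • a' + s • b' + t • c' = 0 := by
    linear_combination (norm := module) hcomb
  rcases le_or_gt 0 s with hs | hs <;> rcases le_or_gt 0 t with ht | ht
  · -- s ≥ 0, t ≥ 0, odd one out is a
    have hpos : 0 < s + t := by
      rcases lt_or_eq_of_le hs with h | h
      · linarith
      · rcases lt_or_eq_of_le ht with h' | h'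
        · linarith
        · exact absurd ⟨h.symm, h'.symm⟩ hst
    exact keylem2 a b c a' b' c' ε ha hb hc (-(s+t)) s t (by linarith) hs ht
      (by ring) hcomb' hεa
  · -- s ≥ 0, t < 0
    rcases le_or_gt (s + t) 0 with hsum | hsum
    · -- odd one out is c
      exact keylem2 c a b c' a' b' ε hc ha hb t (-(s+t)) s ht (by linarith) hs
        (by ring) (by linear_combination (norm := module) hcomb') hεc
    · -- s > 0, odd one out is b (after flipping signs)
      exact keylem2 b a c b' a' c' ε hb ha hc (-s) (s+t) (-t) (by linarith)
        (by linarith) (by linarith) (by ring)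
        (by linear_combination (norm := module) -hcomb') hεb
  · -- s < 0, t ≥ 0
    rcases le_or_gt (s + t) 0 with hsum | hsum
    · -- odd one out is b
      exact keylem2 b a c b' a' c' ε hb ha hc s (-(s+t)) t hs (by linarith) ht
        (by ring) (by linear_combination (norm := module) hcomb') hεb
    · -- t > 0, odd one out is c (after flipping signs)
      exact keylem2 c a b c' a' b' ε hc ha hb (-t) (s+t) (-s) (by linarith)
        (by linarith) (by linarith) (by ring)
        (by linear_combination (norm := module) -hcomb') hεc
  · -- s < 0, t < 0: odd one out is a (after flipping signs)
    exact keylem2 a b c a' b' c' ε ha hb hc (s+t) (-s) (-t) (by linarith)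
      (by linarith) (by linarith) (by ring)
      (by linear_combination (norm := module) -hcomb') hεa

/-- If each vertex of a nondegenerate triangle `T = abc` is moved by at most `ε`, with `ε`
smaller than half the minimal height of `T` (i.e. `2ε` is less than the distance from each
vertex to the line through the opposite side), then the perturbed triangle is nondegenerate
and has the same orientation (sign of the determinant `det (b - a, c - a)`). -/
theorem stmt16 (a b c a' b' c' : EuclideanSpace ℝ (Fin 2)) (ε : ℝ)
    (hT : AffineIndependent ℝ ![a, b, c])
    (ha : dist a a' ≤ ε) (hb : dist b b' ≤ ε) (hc : dist c c' ≤ ε)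
    (hεa : 2 * ε < infDist a ↑(affineSpan ℝ ({b, c} : Set (EuclideanSpace ℝ (Fin 2)))))
    (hεb : 2 * ε < infDist b ↑(affineSpan ℝ ({a, c} : Set (EuclideanSpace ℝ (Fin 2)))))
    (hεc : 2 * ε < infDist c ↑(affineSpan ℝ ({a, b} : Set (EuclideanSpace ℝ (Fin 2))))) :
    AffineIndependent ℝ ![a', b', c'] ∧
    Real.sign ((b' - a') 0 * (c' - a') 1 - (b' - a') 1 * (c' - a') 0) =
      Real.sign ((b - a) 0 * (c - a) 1 - (b - a) 1 * (c - a) 0) := by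
  have hε0 : 0 ≤ ε := le_trans dist_nonneg ha
  -- interpolated vertices
  set A : ℝ → E2 := fun t => a + t • (a' - a) with hA
  set B : ℝ → E2 := fun t => b + t • (b' - b) with hB
  set C : ℝ → E2 := fun t => c + t • (c' - c) with hC
  set f : ℝ → ℝ := fun t =>
    (B t - A t) 0 * (C t - A t) 1 - (B t - A t) 1 * (C t - A t) 0 with hf
  have hdistA : ∀ t ∈ Set.Icc (0:ℝ) 1, dist a (A t) ≤ ε := by
    intro t ht
    rw [hA]
    simp only [dist_self_add_right, norm_smul, Real.norm_eq_abs]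
    calc |t| * ‖a' - a‖ ≤ 1 * ‖a' - a‖ := by
          apply mul_le_mul_of_nonneg_right _ (norm_nonneg _)
          rw [abs_le]; exact ⟨by linarith [ht.1], ht.2⟩
      _ = dist a a' := by rw [one_mul, dist_eq_norm, norm_sub_rev]
      _ ≤ ε := ha
  have hdistB : ∀ t ∈ Set.Icc (0:ℝ) 1, dist b (B t) ≤ ε := by
    intro t ht
    rw [hB]
    simp only [dist_self_add_right, norm_smul, Real.norm_eq_abs]
    calc |t| * ‖b' - b‖ ≤ 1 * ‖b' - b‖ := by
          apply mul_le_mul_of_nonneg_right _ (norm_nonneg _)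
          rw [abs_le]; exact ⟨by linarith [ht.1], ht.2⟩
      _ = dist b b' := by rw [one_mul, dist_eq_norm, norm_sub_rev]
      _ ≤ ε := hb
  have hdistC : ∀ t ∈ Set.Icc (0:ℝ) 1, dist c (C t) ≤ ε := by
    intro t ht
    rw [hC]
    simp only [dist_self_add_right, norm_smul, Real.norm_eq_abs]
    calc |t| * ‖c' - c‖ ≤ 1 * ‖c' - c‖ := by
          apply mul_le_mul_of_nonneg_right _ (norm_nonneg _)
          rw [abs_le]; exact ⟨by linarith [ht.1], ht.2⟩
      _ = dist c c' := by rw [one_mul, dist_eq_norm, norm_sub_rev]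
      _ ≤ ε := hc
  have hfne : ∀ t ∈ Set.Icc (0:ℝ) 1, f t ≠ 0 := fun t ht =>
    nondeg a b c (A t) (B t) (C t) ε (hdistA t ht) (hdistB t ht) (hdistC t ht)
      hεa hεb hεc
  have hf0 : f 0 = (b - a) 0 * (c - a) 1 - (b - a) 1 * (c - a) 0 := by
    simp [hf, hA, hB, hC]
  have hf1 : f 1 = (b' - a') 0 * (c' - a') 1 - (b' - a') 1 * (c' - a') 0 := by
    simp [hf, hA, hB, hC]
  have hcont : Continuous f := by
    apply Continuous.sub <;> apply Continuous.mul <;>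
    · apply Continuous.comp (continuous_apply _)
      fun_prop
  -- f 0 and f 1 have the same sign
  have hsame : (0 < f 0 ∧ 0 < f 1) ∨ (f 0 < 0 ∧ f 1 < 0) := by
    have h0 : f 0 ≠ 0 := hfne 0 (by norm_num)
    have h1 : f 1 ≠ 0 := hfne 1 (by norm_num)
    rcases h0.lt_or_gt with h0' | h0' <;> rcases h1.lt_or_gt with h1' | h1'
    · exact Or.inr ⟨h0', h1'⟩
    · exfalso
      have : (0:ℝ) ∈ Set.Icc (f 0) (f 1) := ⟨le_of_lt h0', le_of_lt h1'⟩
      obtain ⟨t, ht, hft⟩ := intermediate_value_Icc zero_le_one hcont.continuousOn this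
      exact hfne t ht hft
    · exfalso
      have : (0:ℝ) ∈ Set.Icc (f 1) (f 0) := ⟨le_of_lt h1', le_of_lt h0'⟩
      obtain ⟨t, ht, hft⟩ := intermediate_value_Icc' zero_le_one hcont.continuousOn this
      exact hfne t ht hft
    · exact Or.inl ⟨h0', h1'⟩
  have hD' : (b' - a') 0 * (c' - a') 1 - (b' - a') 1 * (c' - a') 0 ≠ 0 := by
    rw [← hf1]; exact hfne 1 (by norm_num)
  constructor
  · -- affine independence from nonvanishing determinant
    rw [affineIndependent_iff_not_collinear]
    intro hcol
    have hmem : a' ∈ Set.range ![a', b', c'] := ⟨0, rfl⟩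
    obtain ⟨v, hv⟩ := (collinear_iff_of_mem hmem).mp hcol
    obtain ⟨r2, h2⟩ := hv b' ⟨1, rfl⟩
    obtain ⟨r3, h3⟩ := hv c' ⟨2, rfl⟩
    apply hD'
    have e2 : b' - a' = r2 • v := by rw [h2]; simp [vadd_eq_add]
    have e3 : c' - a' = r3 • v := by rw [h3]; simp [vadd_eq_add]
    rw [e2, e3]
    simp only [PiLp.smul_apply, smul_eq_mul]
    ring
  · rcases hsame with ⟨h0, h1⟩ | ⟨h0, h1⟩
    · rw [← hf0, ← hf1, Real.sign_of_pos h0, Real.sign_of_pos h1]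
    · rw [← hf0, ← hf1, Real.sign_of_neg h0, Real.sign_of_neg h1]
end
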